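/- For a probability distribution p on a finite set B, the expected Shannon–Fano code length ∑_e p(e)·⌈−log₂ p(e)⌉ is at most H(p) + 1, where H(p) = −∑_e p(e) log₂ p(e) is the Shannon entropy. -/
import Mathlib


/-- Shannon's noiseless coding bound for the Shannon–Fano code: for a probability
distribution `p` on a finite set `B`, the expected code length
`∑_e p(e)·⌈-log₂ p(e)⌉` is at most `H(p) + 1`, where
`H(p) = -∑_e p(e) log₂ p(e)`; terms with `p(e) = 0` contribute `0`. -/
theorem shannon_fano_expected_length
    (B : Type*) [Fintype B] (p : B → ℝ)
    (hp : ∀ e, 0 ≤ p e) (hsum : ∑ e, p e = 1) :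
    ∑ e, (if p e = 0 then 0 else p e * (⌈-Real.logb 2 (p e)⌉ : ℝ)) ≤
      (-∑ e, (if p e = 0 then 0 else p e * Real.logb 2 (p e))) + 1 := by
  have key : ∑ e, (if p e = 0 then 0 else p e * (⌈-Real.logb 2 (p e)⌉ : ℝ)) ≤
      ∑ e, ((if p e = 0 then 0 else -(p e * Real.logb 2 (p e))) +
        (if p e = 0 then 0 else p e)) := by
    apply Finset.sum_le_sum
    intro e _
    by_cases h : p e = 0
    · simp [h]
    · simp only [h, if_false]
      have hpe : 0 < p e := lt_of_le_of_ne (hp e) (Ne.symm h)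
      have hceil : (⌈-Real.logb 2 (p e)⌉ : ℝ) ≤ -Real.logb 2 (p e) + 1 :=
        le_of_lt (Int.ceil_lt_add_one _)
      nlinarith [mul_le_mul_of_nonneg_left hceil (hp e)]
  rw [Finset.sum_add_distrib] at key
  have h1 : ∑ e, (if p e = 0 then 0 else p e) ≤ 1 := by
    rw [← hsum]
    apply Finset.sum_le_sum
    intro e _
    split <;> simp [hp e, *]
  have h2 : ∑ e, (if p e = 0 then 0 else -(p e * Real.logb 2 (p e))) =
      -∑ e, (if p e = 0 then 0 else p e * Real.logb 2 (p e)) := by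
    rw [← Finset.sum_neg_distrib]
    congr 1; ext e; split <;> simp
  linarith
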